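/- Let T>0, n∈ℕ, λ>0, γ≥0, σ>0, α>0, and x₁,…,xₙ∈ℝ, and set x̄ₙ = (1/n)·Σ_{j=1}ⁿ xⱼ. Define Xᵢ*(t) = cᵢ(θ₊)e^{θ₊t} + cᵢ(θ₋)e^{θ₋t} + c(ρ₊)e^{ρ₊t} + c(ρ₋)e^{ρ₋t}, where cᵢ(θ₊) = (x̄ₙ−xᵢ)/(e^{2θ̂T}−1), cᵢ(θ₋) = −(x̄ₙ−xᵢ)/(1−e^{−2θ̂T}), c(ρ₊) = −x̄ₙ/(e^{2ρ̂T}−1), and c(ρ₋) = x̄ₙ/(1−e^{−2ρ̂T}). Then (X₁*,…,Xₙ*) is the unique n-tuple of C² functions on [0,T] satisfying ασ²Xᵢ(t) − 2λẌᵢ(t) = γ·Σ_{j≠i} Ẋⱼ(t) + λ·Σ_{j≠i} Ẍⱼ(t) with boundary conditions Xᵢ(0)=xᵢ and Xᵢ(T)=0 for all i=1,…,n. -/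

import Mathlib

open Set

noncomputable def thetaHat (lam gam sig al : ℝ) : ℝ :=
  Real.sqrt (gam ^ 2 + 4 * al * sig ^ 2 * lam) / (2 * lam)

noncomputable def rhoHat (n : ℕ) (lam gam sig al : ℝ) : ℝ :=
  Real.sqrt (((n : ℝ) - 1) ^ 2 * gam ^ 2 + 4 * ((n : ℝ) + 1) * al * sig ^ 2 * lam)
    / (2 * ((n : ℝ) + 1) * lam)

noncomputable def thetaPlus (lam gam sig al : ℝ) : ℝ :=
  gam / (2 * lam) + thetaHat lam gam sig al

noncomputable def thetaMinus (lam gam sig al : ℝ) : ℝ :=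
  gam / (2 * lam) - thetaHat lam gam sig al

noncomputable def rhoPlus (n : ℕ) (lam gam sig al : ℝ) : ℝ :=
  -(((n : ℝ) - 1) * gam) / (2 * ((n : ℝ) + 1) * lam) + rhoHat n lam gam sig al

noncomputable def rhoMinus (n : ℕ) (lam gam sig al : ℝ) : ℝ :=
  -(((n : ℝ) - 1) * gam) / (2 * ((n : ℝ) + 1) * lam) - rhoHat n lam gam sig al

/-- The closed-form candidate equilibrium strategy
`Xᵢ*(t) = cᵢ(θ₊)e^{θ₊t} + cᵢ(θ₋)e^{θ₋t} + c(ρ₊)e^{ρ₊t} + c(ρ₋)e^{ρ₋t}`. -/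
noncomputable def Xstar (n : ℕ) (lam gam sig al T : ℝ) (x : Fin n → ℝ)
    (i : Fin n) (t : ℝ) : ℝ :=
  (((1 / (n : ℝ)) * ∑ j, x j) - x i)
      / (Real.exp (2 * thetaHat lam gam sig al * T) - 1)
      * Real.exp (thetaPlus lam gam sig al * t)
    + (-(((1 / (n : ℝ)) * ∑ j, x j) - x i))
      / (1 - Real.exp (-(2 * thetaHat lam gam sig al * T)))
      * Real.exp (thetaMinus lam gam sig al * t)
    + (-((1 / (n : ℝ)) * ∑ j, x j))
      / (Real.exp (2 * rhoHat n lam gam sig al * T) - 1)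
      * Real.exp (rhoPlus n lam gam sig al * t)
    + ((1 / (n : ℝ)) * ∑ j, x j)
      / (1 - Real.exp (-(2 * rhoHat n lam gam sig al * T)))
      * Real.exp (rhoMinus n lam gam sig al * t)

/-- The coupled Euler–Lagrange system (zero drift, common risk aversion `al`)
with two-point boundary conditions. -/
def SolvesSystem (T lam gam sig al : ℝ) (n : ℕ) (x : Fin n → ℝ)
    (X : Fin n → ℝ → ℝ) : Prop :=
  (∀ i, ContDiff ℝ 2 (X i)) ∧
  (∀ i, ∀ t ∈ Icc (0 : ℝ) T,
    al * sig ^ 2 * X i t - 2 * lam * deriv (deriv (X i)) t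
      = gam * ∑ j ∈ Finset.univ.erase i, deriv (X j) t
        + lam * ∑ j ∈ Finset.univ.erase i, deriv (deriv (X j)) t) ∧
  (∀ i, X i 0 = x i ∧ X i T = 0)


open intervalIntegral in

lemma bvp_unique {T c lam b : ℝ} (hT : 0 < T) (hc : 0 < c) (hlam : 0 < lam)
    {u : ℝ → ℝ} (hu : ContDiff ℝ 2 u)
    (hode : ∀ t ∈ Icc (0:ℝ) T, lam * deriv (deriv u) t = c * u t + b * deriv u t)
    (h0 : u 0 = 0) (hTT : u T = 0) :
    ∀ t ∈ Icc (0:ℝ) T, u t = 0 := by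
  have hd1 : Differentiable ℝ u := hu.differentiable (by norm_num)
  have hu1 : ContDiff ℝ 1 (deriv u) := by
    have := (contDiff_succ_iff_deriv (n := 1)).mp (by norm_num at hu ⊢; exact hu)
    exact this.2.2
  have hd2 : Differentiable ℝ (deriv u) := hu1.differentiable (by norm_num)
  have hcont0 : Continuous u := hd1.continuous
  have hcont1 : Continuous (deriv u) := hd2.continuous
  have hcont2 : Continuous (deriv (deriv u)) := (contDiff_one_iff_deriv.mp hu1).2
  -- integral of (u')^2 + u * u''
  have key1 : ∫ t in (0:ℝ)..T,
      (deriv u t * deriv u t + u t * deriv (deriv u) t) = 0 := by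
    have : ∀ t ∈ uIcc (0:ℝ) T, HasDerivAt (fun s => u s * deriv u s)
        (deriv u t * deriv u t + u t * deriv (deriv u) t) t := by
      intro t _
      exact ((hd1 t).hasDerivAt).mul ((hd2 t).hasDerivAt)
    rw [integral_eq_sub_of_hasDerivAt this
      (((hcont1.mul hcont1).add (hcont0.mul hcont2)).intervalIntegrable _ _)]
    rw [h0, hTT]; ring
  have key2 : ∫ t in (0:ℝ)..T, (u t * deriv u t) = 0 := by
    have : ∀ t ∈ uIcc (0:ℝ) T, HasDerivAt (fun s => u s * u s / 2)
        (u t * deriv u t) t := by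
      intro t _
      have := ((hd1 t).hasDerivAt).mul ((hd1 t).hasDerivAt)
      have h2 := this.div_const 2
      exact h2.congr_deriv (by ring)
    rw [integral_eq_sub_of_hasDerivAt this
      ((hcont0.mul hcont1).intervalIntegrable _ _)]
    rw [h0, hTT]; ring
  -- rewrite u * u'' using the ODE on [0,T]
  have key3 : ∫ t in (0:ℝ)..T, (u t * deriv (deriv u) t)
      = (c / lam) * ∫ t in (0:ℝ)..T, (u t * u t) := by
    have hcongr : ∫ t in (0:ℝ)..T, (u t * deriv (deriv u) t)
        = ∫ t in (0:ℝ)..T, ((c / lam) * (u t * u t) + (b / lam) * (u t * deriv u t)) := by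
      apply integral_congr
      intro t ht
      rw [uIcc_of_le hT.le] at ht
      have h := hode t ht
      have hl : deriv (deriv u) t = (c * u t + b * deriv u t) / lam := by
        field_simp at h ⊢; linarith
      show u t * deriv (deriv u) t = _
      rw [hl]; field_simp
    rw [hcongr, integral_add (f := fun t => (c / lam) * (u t * u t))
      (g := fun t => (b / lam) * (u t * deriv u t)) ((continuous_const.mul (hcont0.mul hcont0)).intervalIntegrable _ _)
      ((continuous_const.mul (hcont0.mul hcont1)).intervalIntegrable _ _),
      integral_const_mul, integral_const_mul, key2]
    ring
  have hnn1 : 0 ≤ ∫ t in (0:ℝ)..T, (deriv u t * deriv u t) :=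
    integral_nonneg hT.le (fun t _ => mul_self_nonneg _)
  have hnn2 : 0 ≤ ∫ t in (0:ℝ)..T, (u t * u t) :=
    integral_nonneg hT.le (fun t _ => mul_self_nonneg _)
  have hsplit : (∫ t in (0:ℝ)..T, (deriv u t * deriv u t))
      + (c / lam) * ∫ t in (0:ℝ)..T, (u t * u t) = 0 := by
    have hadd := integral_add (f := fun t => deriv u t * deriv u t)
      (g := fun t => u t * deriv (deriv u) t) ((hcont1.mul hcont1).intervalIntegrable (μ := MeasureTheory.volume) 0 T)
      ((hcont0.mul hcont2).intervalIntegrable 0 T)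
    rw [key1] at hadd
    linarith [key3]
  have hcl : 0 < c / lam := div_pos hc hlam
  have hint0 : ∫ t in (0:ℝ)..T, (u t * u t) = 0 := by
    nlinarith
  -- conclude u = 0 on [0,T]
  intro t ht
  by_contra hne
  have ht' : t ∈ Ioo (0:ℝ) T := by
    rcases ht.1.eq_or_lt with h | h
    · exact absurd (by rw [← h]; exact h0) hne
    rcases ht.2.eq_or_lt with h2 | h2
    · exact absurd (by rw [h2]; exact hTT) hne
    exact ⟨h, h2⟩
  have hpos : 0 < ∫ t in (0:ℝ)..T, (u t * u t) := by
    rw [integral_pos_iff_support_of_nonneg_ae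
      (Filter.Eventually.of_forall fun t => mul_self_nonneg _)
      ((hcont0.mul hcont0).intervalIntegrable _ _)]
    refine ⟨hT, ?_⟩
    have hVopen : IsOpen ({s | u s ≠ 0} ∩ Ioo 0 T) :=
      (isOpen_compl_singleton.preimage hcont0).inter isOpen_Ioo
    have hsub : ({s | u s ≠ 0} ∩ Ioo 0 T) ⊆ Function.support (fun s => u s * u s) ∩ Ioc 0 T := by
      rintro s ⟨hs1, hs2⟩
      exact ⟨mul_self_ne_zero.mpr hs1, Ioo_subset_Ioc_self hs2⟩
    calc (0:ENNReal) < MeasureTheory.volume ({s | u s ≠ 0} ∩ Ioo 0 T) :=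
          hVopen.measure_pos _ ⟨t, hne, ht'⟩
      _ ≤ _ := MeasureTheory.measure_mono hsub
  exact hpos.ne' hint0

lemma root_quad {A B C s : ℝ} (hA : A ≠ 0) (hs : s ^ 2 = B ^ 2 + 4 * A * C) :
    A * ((-B + s) / (2 * A)) ^ 2 + B * ((-B + s) / (2 * A)) - C = 0 ∧
    A * ((-B - s) / (2 * A)) ^ 2 + B * ((-B - s) / (2 * A)) - C = 0 := by
  constructor <;> (field_simp; linear_combination hs)

lemma thetaHat_pos {lam gam sig al : ℝ} (hlam : 0 < lam) (hsig : 0 < sig) (hal : 0 < al) :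
    0 < thetaHat lam gam sig al :=
  div_pos (Real.sqrt_pos.mpr (by positivity)) (by positivity)

lemma rhoHat_pos {lam gam sig al : ℝ} (n : ℕ) (hlam : 0 < lam) (hsig : 0 < sig) (hal : 0 < al) :
    0 < rhoHat n lam gam sig al := by
  have h1 : (0:ℝ) < (n:ℝ) + 1 := by positivity
  exact div_pos (Real.sqrt_pos.mpr (by positivity)) (by positivity)

lemma theta_root {lam gam sig al : ℝ} (hlam : 0 < lam) (hsig : 0 < sig) (hal : 0 < al) :
    lam * thetaPlus lam gam sig al ^ 2 + (-gam) * thetaPlus lam gam sig al - al * sig ^ 2 = 0 ∧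
    lam * thetaMinus lam gam sig al ^ 2 + (-gam) * thetaMinus lam gam sig al - al * sig ^ 2 = 0 := by
  have hs : Real.sqrt (gam ^ 2 + 4 * al * sig ^ 2 * lam) ^ 2
      = (-gam) ^ 2 + 4 * lam * (al * sig ^ 2) := by
    rw [Real.sq_sqrt (by positivity)]; ring
  have h1 : thetaPlus lam gam sig al
      = (-(-gam) + Real.sqrt (gam ^ 2 + 4 * al * sig ^ 2 * lam)) / (2 * lam) := by
    unfold thetaPlus thetaHat; ring
  have h2 : thetaMinus lam gam sig al
      = (-(-gam) - Real.sqrt (gam ^ 2 + 4 * al * sig ^ 2 * lam)) / (2 * lam) := by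
    unfold thetaMinus thetaHat; ring
  rw [h1, h2]
  exact root_quad hlam.ne' hs

lemma rho_root {lam gam sig al : ℝ} (n : ℕ) (hlam : 0 < lam) (hsig : 0 < sig) (hal : 0 < al) :
    ((n:ℝ) + 1) * lam * rhoPlus n lam gam sig al ^ 2
      + ((n:ℝ) - 1) * gam * rhoPlus n lam gam sig al - al * sig ^ 2 = 0 ∧
    ((n:ℝ) + 1) * lam * rhoMinus n lam gam sig al ^ 2
      + ((n:ℝ) - 1) * gam * rhoMinus n lam gam sig al - al * sig ^ 2 = 0 := by
  have h0 : (0:ℝ) < (n:ℝ) + 1 := by positivity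
  have hA : ((n:ℝ) + 1) * lam ≠ 0 := by positivity
  have hs : Real.sqrt (((n:ℝ) - 1) ^ 2 * gam ^ 2 + 4 * ((n:ℝ) + 1) * al * sig ^ 2 * lam) ^ 2
      = (((n:ℝ) - 1) * gam) ^ 2 + 4 * (((n:ℝ) + 1) * lam) * (al * sig ^ 2) := by
    rw [Real.sq_sqrt (by positivity)]; ring
  have h1 : rhoPlus n lam gam sig al
      = (-(((n:ℝ) - 1) * gam)
          + Real.sqrt (((n:ℝ) - 1) ^ 2 * gam ^ 2 + 4 * ((n:ℝ) + 1) * al * sig ^ 2 * lam))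
        / (2 * (((n:ℝ) + 1) * lam)) := by
    unfold rhoPlus rhoHat; ring
  have h2 : rhoMinus n lam gam sig al
      = (-(((n:ℝ) - 1) * gam)
          - Real.sqrt (((n:ℝ) - 1) ^ 2 * gam ^ 2 + 4 * ((n:ℝ) + 1) * al * sig ^ 2 * lam))
        / (2 * (((n:ℝ) + 1) * lam)) := by
    unfold rhoMinus rhoHat; ring
  rw [h1, h2]
  exact root_quad hA hs

lemma hasDerivAt_comb (c1 a c2 b c3 p c4 q t : ℝ) :
    HasDerivAt (fun t => c1 * Real.exp (a * t) + c2 * Real.exp (b * t)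
      + c3 * Real.exp (p * t) + c4 * Real.exp (q * t))
      (c1 * a * Real.exp (a * t) + c2 * b * Real.exp (b * t)
        + c3 * p * Real.exp (p * t) + c4 * q * Real.exp (q * t)) t := by
  have h : ∀ r : ℝ, HasDerivAt (fun t : ℝ => Real.exp (r * t)) (r * Real.exp (r * t)) t := by
    intro r
    have := (Real.hasDerivAt_exp (r * t)).comp t ((hasDerivAt_id t).const_mul r)
    exact this.congr_deriv (by ring)
  have := (((((h a).const_mul c1).add ((h b).const_mul c2)).add
    ((h p).const_mul c3)).add ((h q).const_mul c4))
  exact this.congr_deriv (by ring)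

lemma contDiff_comb (c1 a c2 b c3 p c4 q : ℝ) :
    ContDiff ℝ 2 (fun t => c1 * Real.exp (a * t) + c2 * Real.exp (b * t)
      + c3 * Real.exp (p * t) + c4 * Real.exp (q * t)) := by
  have h : ∀ r : ℝ, ContDiff ℝ 2 fun t : ℝ => Real.exp (r * t) :=
    fun r => Real.contDiff_exp.comp (contDiff_const.mul contDiff_id)
  exact (((contDiff_const.mul (h a)).add (contDiff_const.mul (h b))).add
    (contDiff_const.mul (h p))).add (contDiff_const.mul (h q))

lemma contDiff2_derivs {u : ℝ → ℝ} (hu : ContDiff ℝ 2 u) :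
    Differentiable ℝ u ∧ Differentiable ℝ (deriv u) ∧ Continuous (deriv (deriv u)) := by
  have hu1 : ContDiff ℝ 1 (deriv u) := by
    have := (contDiff_succ_iff_deriv (n := 1)).mp (by norm_num at hu ⊢; exact hu)
    exact this.2.2
  have hd2 : Differentiable ℝ (deriv u) := hu1.differentiable (by norm_num)
  exact ⟨hu.differentiable (by norm_num), hd2, (contDiff_one_iff_deriv.mp hu1).2⟩

/-- the closed-form functions `Xᵢ*` form the unique solution of
the coupled Euler–Lagrange boundary value system with equal risk aversions
and zero drift. -/
theorem stmt_4 (T : ℝ) (hT : 0 < T) (n : ℕ) (hn : 0 < n)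
    (lam gam sig al : ℝ)
    (hlam : 0 < lam) (hgam : 0 ≤ gam) (hsig : 0 < sig) (hal : 0 < al)
    (x : Fin n → ℝ) :
    SolvesSystem T lam gam sig al n x (Xstar n lam gam sig al T x) ∧
    (∀ X : Fin n → ℝ → ℝ, SolvesSystem T lam gam sig al n x X →
      ∀ i, EqOn (X i) (Xstar n lam gam sig al T x i) (Icc 0 T)) := by
  have hn1 : 1 ≤ n := hn
  have hn' : (0:ℝ) < (n:ℝ) := by exact_mod_cast hn
  have hth : 0 < thetaHat lam gam sig al := thetaHat_pos hlam hsig hal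
  have hrh : 0 < rhoHat n lam gam sig al := rhoHat_pos n hlam hsig hal
  set B : ℝ := (1 / (n:ℝ)) * ∑ k, x k with hB
  set A : Fin n → ℝ := fun j => B - x j with hA
  set a : ℝ := thetaPlus lam gam sig al with ha
  set b : ℝ := thetaMinus lam gam sig al with hb
  set p : ℝ := rhoPlus n lam gam sig al with hp
  set q : ℝ := rhoMinus n lam gam sig al with hq
  set E : ℝ := Real.exp (2 * thetaHat lam gam sig al * T) with hE
  set E' : ℝ := Real.exp (-(2 * thetaHat lam gam sig al * T)) with hE'
  set F : ℝ := Real.exp (2 * rhoHat n lam gam sig al * T) with hF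
  set F' : ℝ := Real.exp (-(2 * rhoHat n lam gam sig al * T)) with hF'
  -- basic denominators
  have hE1 : 1 < E := by rw [hE]; exact Real.one_lt_exp_iff.mpr (by positivity)
  have hF1 : 1 < F := by rw [hF]; exact Real.one_lt_exp_iff.mpr (by positivity)
  have hEne : E - 1 ≠ 0 := sub_ne_zero.mpr hE1.ne'
  have hFne : F - 1 ≠ 0 := sub_ne_zero.mpr hF1.ne'
  have hE0 : E ≠ 0 := by rw [hE]; exact (Real.exp_pos _).ne'
  have hF0 : F ≠ 0 := by rw [hF]; exact (Real.exp_pos _).ne'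
  have hE'lt : E' < 1 := by
    rw [hE']; exact Real.exp_lt_one_iff.mpr (neg_lt_zero.mpr (by positivity))
  have hF'lt : F' < 1 := by
    rw [hF']; exact Real.exp_lt_one_iff.mpr (neg_lt_zero.mpr (by positivity))
  have hE'ne : 1 - E' ≠ 0 := sub_ne_zero.mpr hE'lt.ne'
  have hF'ne : 1 - F' ≠ 0 := sub_ne_zero.mpr hF'lt.ne'
  have hE'eq : E' = E⁻¹ := by rw [hE', hE, ← Real.exp_neg]
  have hF'eq : F' = F⁻¹ := by rw [hF', hF, ← Real.exp_neg]
  -- the closed form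
  have hXf : ∀ j, Xstar n lam gam sig al T x j
      = fun t => A j / (E - 1) * Real.exp (a * t) + (-(A j)) / (1 - E') * Real.exp (b * t)
        + (-B) / (F - 1) * Real.exp (p * t) + B / (1 - F') * Real.exp (q * t) :=
    fun j => rfl
  have hXc : ∀ j, ContDiff ℝ 2 (Xstar n lam gam sig al T x j) := by
    intro j; rw [hXf j]; exact contDiff_comb _ _ _ _ _ _ _ _
  have hd1 : ∀ j s, deriv (Xstar n lam gam sig al T x j) s
      = A j / (E - 1) * a * Real.exp (a * s) + (-(A j)) / (1 - E') * b * Real.exp (b * s)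
        + (-B) / (F - 1) * p * Real.exp (p * s) + B / (1 - F') * q * Real.exp (q * s) := by
    intro j s; rw [hXf j]; exact (hasDerivAt_comb _ a _ b _ p _ q s).deriv
  have hd1f : ∀ j, deriv (Xstar n lam gam sig al T x j)
      = fun s => A j / (E - 1) * a * Real.exp (a * s) + (-(A j)) / (1 - E') * b * Real.exp (b * s)
        + (-B) / (F - 1) * p * Real.exp (p * s) + B / (1 - F') * q * Real.exp (q * s) :=
    fun j => funext (hd1 j)
  have hd2 : ∀ j s, deriv (deriv (Xstar n lam gam sig al T x j)) s
      = A j / (E - 1) * a * a * Real.exp (a * s)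
        + (-(A j)) / (1 - E') * b * b * Real.exp (b * s)
        + (-B) / (F - 1) * p * p * Real.exp (p * s)
        + B / (1 - F') * q * q * Real.exp (q * s) := by
    intro j s; rw [hd1f j]; exact (hasDerivAt_comb _ a _ b _ p _ q s).deriv
  -- root identities
  have Hth := theta_root (lam := lam) (gam := gam) (sig := sig) (al := al) hlam hsig hal
  rw [← ha, ← hb] at Hth
  have Hrho := rho_root (lam := lam) (gam := gam) (sig := sig) (al := al) n hlam hsig hal
  rw [← hp, ← hq] at Hrho
  -- sum of A over erase
  have htot : ∑ j, A j = 0 := by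
    simp only [hA, hB, Finset.sum_sub_distrib, Finset.sum_const, Finset.card_univ,
      Fintype.card_fin, nsmul_eq_mul]
    field_simp
    ring
  have hsumA : ∀ i : Fin n, ∑ j ∈ Finset.univ.erase i, A j = -(A i) := by
    intro i; rw [Finset.sum_erase_eq_sub (Finset.mem_univ i), htot]; ring
  have hcard : ∀ i : Fin n, ((Finset.univ.erase i).card : ℝ) = (n:ℝ) - 1 := by
    intro i
    rw [Finset.card_erase_of_mem (Finset.mem_univ i), Finset.card_univ, Fintype.card_fin,
      Nat.cast_sub hn1, Nat.cast_one]
  -- boundary values of Xstar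
  have hb0 : ∀ j, Xstar n lam gam sig al T x j 0 = x j := by
    intro j
    rw [hXf j]
    show A j / (E - 1) * Real.exp (a * 0) + (-(A j)) / (1 - E') * Real.exp (b * 0)
        + (-B) / (F - 1) * Real.exp (p * 0) + B / (1 - F') * Real.exp (q * 0) = x j
    simp only [mul_zero, Real.exp_zero, mul_one, hE'eq, hF'eq, hA]
    field_simp
    ring
  have hbT : ∀ j, Xstar n lam gam sig al T x j T = 0 := by
    intro j
    rw [hXf j]
    show A j / (E - 1) * Real.exp (a * T) + (-(A j)) / (1 - E') * Real.exp (b * T)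
        + (-B) / (F - 1) * Real.exp (p * T) + B / (1 - F') * Real.exp (q * T) = 0
    have haT : a * T = b * T + 2 * thetaHat lam gam sig al * T := by
      rw [ha, hb]; unfold thetaPlus thetaMinus; ring
    have hpT : p * T = q * T + 2 * rhoHat n lam gam sig al * T := by
      rw [hp, hq]; unfold rhoPlus rhoMinus; ring
    rw [haT, hpT, Real.exp_add, Real.exp_add, ← hE, ← hF, hE'eq, hF'eq]
    field_simp
    ring
  -- the ODE for Xstar
  have hode : ∀ i, ∀ t ∈ Icc (0:ℝ) T,
      al * sig ^ 2 * Xstar n lam gam sig al T x i t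
          - 2 * lam * deriv (deriv (Xstar n lam gam sig al T x i)) t
        = gam * ∑ j ∈ Finset.univ.erase i, deriv (Xstar n lam gam sig al T x j) t
          + lam * ∑ j ∈ Finset.univ.erase i, deriv (deriv (Xstar n lam gam sig al T x j)) t := by
    intro i t _
    have hXit : Xstar n lam gam sig al T x i t
        = A i / (E - 1) * Real.exp (a * t) + (-(A i)) / (1 - E') * Real.exp (b * t)
          + (-B) / (F - 1) * Real.exp (p * t) + B / (1 - F') * Real.exp (q * t) := by
      rw [hXf i]
    rw [hXit, hd2 i]
    have hs1 : ∑ j ∈ Finset.univ.erase i, deriv (Xstar n lam gam sig al T x j) t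
        = (-(A i)) / (E - 1) * a * Real.exp (a * t) + (A i) / (1 - E') * b * Real.exp (b * t)
          + ((n:ℝ) - 1) * ((-B) / (F - 1) * p * Real.exp (p * t))
          + ((n:ℝ) - 1) * (B / (1 - F') * q * Real.exp (q * t)) := by
      rw [Finset.sum_congr rfl (fun j _ => hd1 j t)]
      simp only [Finset.sum_add_distrib, ← Finset.sum_mul, ← Finset.sum_div,
        Finset.sum_neg_distrib, Finset.sum_const, nsmul_eq_mul, hsumA i, hcard i]
      ring
    have hs2 : ∑ j ∈ Finset.univ.erase i, deriv (deriv (Xstar n lam gam sig al T x j)) t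
        = (-(A i)) / (E - 1) * a * a * Real.exp (a * t)
          + (A i) / (1 - E') * b * b * Real.exp (b * t)
          + ((n:ℝ) - 1) * ((-B) / (F - 1) * p * p * Real.exp (p * t))
          + ((n:ℝ) - 1) * (B / (1 - F') * q * q * Real.exp (q * t)) := by
      rw [Finset.sum_congr rfl (fun j _ => hd2 j t)]
      simp only [Finset.sum_add_distrib, ← Finset.sum_mul, ← Finset.sum_div,
        Finset.sum_neg_distrib, Finset.sum_const, nsmul_eq_mul, hsumA i, hcard i]
      ring
    rw [hs1, hs2]
    linear_combination (-(A i / (E - 1) * Real.exp (a * t))) * Hth.1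
      + (-((-(A i)) / (1 - E') * Real.exp (b * t))) * Hth.2
      + (-((-B) / (F - 1) * Real.exp (p * t))) * Hrho.1
      + (-(B / (1 - F') * Real.exp (q * t))) * Hrho.2
  have hsolves : SolvesSystem T lam gam sig al n x (Xstar n lam gam sig al T x) :=
    ⟨hXc, hode, fun i => ⟨hb0 i, hbT i⟩⟩
  refine ⟨hsolves, ?_⟩
  -- uniqueness
  intro X hX i
  obtain ⟨hXc2, hXode, hXbd⟩ := hX
  set Y : Fin n → ℝ → ℝ := fun j t => X j t - Xstar n lam gam sig al T x j t with hY
  have hYc : ∀ j, ContDiff ℝ 2 (Y j) := fun j => (hXc2 j).sub (hXc j)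
  have hXd := fun j => contDiff2_derivs (hXc2 j)
  have hXsd := fun j => contDiff2_derivs (hXc j)
  have hYd := fun j => contDiff2_derivs (hYc j)
  have hdY : ∀ j t, deriv (Y j) t = deriv (X j) t - deriv (Xstar n lam gam sig al T x j) t :=
    fun j t => deriv_sub ((hXd j).1 t) ((hXsd j).1 t)
  have hdYf : ∀ j, deriv (Y j) = fun t => deriv (X j) t - deriv (Xstar n lam gam sig al T x j) t :=
    fun j => funext (hdY j)
  have hd2Y : ∀ j t, deriv (deriv (Y j)) t
      = deriv (deriv (X j)) t - deriv (deriv (Xstar n lam gam sig al T x j)) t := by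
    intro j t
    rw [hdYf j]
    exact deriv_sub ((hXd j).2.1 t) ((hXsd j).2.1 t)
  have hYode : ∀ j, ∀ t ∈ Icc (0:ℝ) T,
      al * sig ^ 2 * Y j t - 2 * lam * deriv (deriv (Y j)) t
        = gam * ∑ k ∈ Finset.univ.erase j, deriv (Y k) t
          + lam * ∑ k ∈ Finset.univ.erase j, deriv (deriv (Y k)) t := by
    intro j t ht
    have e1 := hXode j t ht
    have e2 := hode j t ht
    simp only [hdY, hd2Y]
    simp only [hY]
    rw [Finset.sum_sub_distrib, Finset.sum_sub_distrib]
    ring_nf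
    ring_nf at e1 e2
    linarith
  -- boundary for Y
  have hY0 : ∀ j, Y j 0 = 0 := by
    intro j; simp only [hY]; rw [(hXbd j).1, hb0 j]; ring
  have hYT : ∀ j, Y j T = 0 := by
    intro j; simp only [hY]; rw [(hXbd j).2, hbT j]; ring
  -- aggregate S
  set S : ℝ → ℝ := fun t => ∑ j, Y j t with hS
  have hSc : ContDiff ℝ 2 S := ContDiff.sum (fun j _ => hYc j)
  have hSd := contDiff2_derivs hSc
  have hSder : ∀ t, deriv S t = ∑ j, deriv (Y j) t := by
    intro t
    exact deriv_fun_sum (fun j _ => ((hYd j).1 t))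
  have hSderf : deriv S = fun t => ∑ j, deriv (Y j) t := funext hSder
  have hS2der : ∀ t, deriv (deriv S) t = ∑ j, deriv (deriv (Y j)) t := by
    intro t
    rw [hSderf]
    exact deriv_fun_sum (fun j _ => ((hYd j).2.1 t))
  have hdbl : ∀ g : Fin n → ℝ, ∑ i : Fin n, ∑ j ∈ Finset.univ.erase i, g j
      = ((n:ℝ) - 1) * ∑ j, g j := by
    intro g
    have h1 : ∀ i : Fin n, ∑ j ∈ Finset.univ.erase i, g j = (∑ j, g j) - g i :=
      fun i => Finset.sum_erase_eq_sub (Finset.mem_univ i)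
    simp only [h1, Finset.sum_sub_distrib, Finset.sum_const, Finset.card_univ,
      Fintype.card_fin, nsmul_eq_mul]
    ring
  have hSode : ∀ t ∈ Icc (0:ℝ) T,
      (((n:ℝ) + 1) * lam) * deriv (deriv S) t
        = (al * sig ^ 2) * S t + (-(((n:ℝ) - 1) * gam)) * deriv S t := by
    intro t ht
    have hL : ∑ i : Fin n, (al * sig ^ 2 * Y i t - 2 * lam * deriv (deriv (Y i)) t)
        = ∑ i : Fin n, (gam * ∑ j ∈ Finset.univ.erase i, deriv (Y j) t
          + lam * ∑ j ∈ Finset.univ.erase i, deriv (deriv (Y j)) t) :=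
      Finset.sum_congr rfl (fun i _ => hYode i t ht)
    simp only [Finset.sum_sub_distrib, Finset.sum_add_distrib, ← Finset.mul_sum, hdbl] at hL
    have e1 : S t = ∑ j, Y j t := rfl
    have e0 : ∑ j, Y j t = (∑ j, X j t) - ∑ j, Xstar n lam gam sig al T x j t :=
      Finset.sum_sub_distrib _ _
    rw [e1, hSder t, hS2der t]
    linear_combination -hL
  have hSzero : ∀ t ∈ Icc (0:ℝ) T, S t = 0 := by
    have hS0 : S 0 = 0 := by simp only [hS]; simp [hY0]
    have hST : S T = 0 := by simp only [hS]; simp [hYT]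
    exact bvp_unique hT (by positivity) (by positivity) hSc hSode hS0 hST
  have hS1zero : ∀ t ∈ Icc (0:ℝ) T, deriv S t = 0 := by
    have hIoo : EqOn (deriv S) (fun _ => (0:ℝ)) (Ioo 0 T) := by
      intro s hs
      have hev : S =ᶠ[nhds s] (fun _ => (0:ℝ)) :=
        Filter.eventuallyEq_of_mem (Icc_mem_nhds hs.1 hs.2) hSzero
      simpa using hev.deriv_eq
    have hclos := (hIoo.closure (hSd.2.1.continuous) continuous_const)
    rw [closure_Ioo hT.ne] at hclos
    exact fun t ht => hclos ht
  have hS2zero : ∀ t ∈ Icc (0:ℝ) T, deriv (deriv S) t = 0 := by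
    have hIoo : EqOn (deriv (deriv S)) (fun _ => (0:ℝ)) (Ioo 0 T) := by
      intro s hs
      have hev : deriv S =ᶠ[nhds s] (fun _ => (0:ℝ)) :=
        Filter.eventuallyEq_of_mem (Icc_mem_nhds hs.1 hs.2) hS1zero
      simpa using hev.deriv_eq
    have hclos := (hIoo.closure (hSd.2.2) continuous_const)
    rw [closure_Ioo hT.ne] at hclos
    exact fun t ht => hclos ht
  -- single-player equation for Y i
  have hYi : ∀ t ∈ Icc (0:ℝ) T,
      lam * deriv (deriv (Y i)) t = (al * sig ^ 2) * Y i t + gam * deriv (Y i) t := by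
    intro t ht
    have e1 := hYode i t ht
    have e2 : ∑ k ∈ Finset.univ.erase i, deriv (Y k) t = -(deriv (Y i) t) := by
      rw [Finset.sum_erase_eq_sub (Finset.mem_univ i), ← hSder t, hS1zero t ht]; ring
    have e3 : ∑ k ∈ Finset.univ.erase i, deriv (deriv (Y k)) t = -(deriv (deriv (Y i)) t) := by
      rw [Finset.sum_erase_eq_sub (Finset.mem_univ i), ← hS2der t, hS2zero t ht]; ring
    rw [e2, e3] at e1
    linarith
  have hYzero : ∀ t ∈ Icc (0:ℝ) T, Y i t = 0 :=
    bvp_unique hT (by positivity) hlam (hYc i) hYi (hY0 i) (hYT i)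
  intro t ht
  have := hYzero t ht
  simp only [hY] at this
  linarith
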